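/- The force-free conditions (a) l(ln|κ|) + dl♭(n,l) + ds♭(l,s) = 0 and (b) dl♭(l, α♯) = 0 are independent of the choices made: they are invariant under any change of null foliation adapted chart (x^a → x̄^a with ∂x^a/∂x̄^i = 0 for a = 3,4, i = 1,2, under which u·κ is invariant), under the rescaling l → f l, n → (1/f) n for any nonvanishing smooth function f (under which κ → κ/f), and under the shifts s → s + g̃ l, α → α + h l♭ with the corresponding change of n, for any smooth functions g̃, h. -/

import Mathlib

noncomputable section

namespace FFE

/-- Points of the chart domain `U_p ⊆ M` of a spacetime, in coordinates
`(x¹,…,x⁴)` (indexed here by `0,…,3`, so `x³ ↦ 2` and `x⁴ ↦ 3`). -/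
abbrev Pt : Type := Fin 4 → ℝ

/-- Scalar fields. -/
abbrev Sc : Type := Pt → ℝ

/-- Vector fields, given by their chart components. -/
abbrev Vec : Type := Fin 4 → Sc

/-- Covector fields (1-forms), given by their chart components. -/
abbrev Cov : Type := Fin 4 → Sc

/-- 2-forms, given by their (antisymmetric) chart components. -/
abbrev Form2 : Type := Fin 4 → Fin 4 → Sc

/-- Partial derivative along the `i`-th coordinate. -/
def pd (i : Fin 4) (f : Sc) : Sc := fun p => fderiv ℝ f p (Pi.single i 1)

/-- Smoothness of a scalar field. -/
def Smooth (f : Sc) : Prop := ContDiff ℝ (⊤ : ℕ∞) f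

/-- Directional derivative of a scalar field along a vector field. -/
def act (v : Vec) (f : Sc) : Sc := ∑ i, v i * pd i f

/-- Lie bracket of vector fields. -/
def bracket (v w : Vec) : Vec := fun μ => act v (w μ) - act w (v μ)

/-- Exterior derivative of a 1-form, evaluated on two vector fields:
`dω(v,w) = (∂_μ ω_ν − ∂_ν ω_μ) v^μ w^ν`. -/
def dOne (ω : Cov) (v w : Vec) : Sc :=
  ∑ μ, ∑ ν, (pd μ (ω ν) - pd ν (ω μ)) * v μ * w ν

/-- `log |f|`. -/
def logabs (f : Sc) : Sc := fun p => Real.log |f p|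

/-- A (smooth) Lorentzian metric of signature `(-1,1,1,1)`, given in a chart by its
covariant components `gdown`, contravariant components `ginv`, and volume factor
`vol = √(−det g)`. -/
structure Lorentzian where
  gdown : Fin 4 → Fin 4 → Sc
  ginv : Fin 4 → Fin 4 → Sc
  vol : Sc
  smooth_gdown : ∀ μ ν, Smooth (gdown μ ν)
  smooth_ginv : ∀ μ ν, Smooth (ginv μ ν)
  smooth_vol : Smooth vol
  symm_gdown : ∀ μ ν, gdown μ ν = gdown ν μ
  symm_ginv : ∀ μ ν, ginv μ ν = ginv ν μ
  inv_gdown : ∀ μ ν p, (∑ ρ, ginv μ ρ p * gdown ρ ν p) = if μ = ν then 1 else 0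
  vol_pos : ∀ p, 0 < vol p
  vol_sq : ∀ p, vol p ^ 2 = -Matrix.det (Matrix.of fun μ ν => gdown μ ν p)
  signature : ∀ p, ∃ e : Fin 4 → Fin 4 → ℝ, ∀ i j,
    (∑ μ, ∑ ν, gdown μ ν p * e i μ * e j ν) =
      if i = j then (if i = 0 then -1 else 1) else 0

namespace Lorentzian

variable (g : Lorentzian)

/-- Lowering an index: `v ↦ v♭`. -/
def flat (v : Vec) : Cov := fun μ => ∑ ν, g.gdown μ ν * v ν

/-- Raising an index: `ω ↦ ω♯`. -/
def sharp (ω : Cov) : Vec := fun μ => ∑ ν, g.ginv μ ν * ω ν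

/-- Metric pairing `g(v,w)` of vector fields. -/
def inner (v w : Vec) : Sc := ∑ μ, ∑ ν, g.gdown μ ν * v μ * w ν

/-- Christoffel symbols of the Levi-Civita connection. -/
def christoffel (μ ν ρ : Fin 4) : Sc := fun p =>
  (1 / 2) * ∑ σ, g.ginv μ σ p *
    (pd ν (g.gdown σ ρ) p + pd ρ (g.gdown σ ν) p - pd σ (g.gdown ν ρ) p)

/-- Covariant derivative `∇_v w` of the Levi-Civita connection. -/
def nabla (v w : Vec) : Vec := fun μ =>
  (∑ ν, v ν * pd ν (w μ)) + ∑ ν, ∑ ρ, g.christoffel μ ν ρ * v ν * w ρ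

/-- Divergence `∇_μ X^μ = (1/√(−g)) ∂_μ (√(−g) X^μ)`. -/
def div (v : Vec) : Sc := fun p =>
  (g.vol p)⁻¹ * ∑ μ, pd μ (fun q => g.vol q * v μ q) p

/-- Raising both indices of a 2-form. -/
def up2 (F : Form2) : Form2 := fun μ ν => ∑ ρ, ∑ σ, g.ginv μ ρ * g.ginv ν σ * F ρ σ

/-- The full contraction `F_{μν} F^{μν}`. -/
def contract2 (F : Form2) : Sc := ∑ μ, ∑ ν, F μ ν * g.up2 F μ ν

/-- The current density vector `j = *(d*F)`, in components
`j^μ = (1/√(−g)) ∂_ν (√(−g) F^{μν})`. -/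
def current (F : Form2) : Vec := fun μ => fun p =>
  (g.vol p)⁻¹ * ∑ ν, pd ν (fun q => g.vol q * g.up2 F μ ν q) p

/-- `F` is a null 2-form: `F_{μν}F^{μν} = 0`. -/
def IsNull (F : Form2) : Prop := g.contract2 F = 0

/-- The force-free condition `i_{j♯} F = 0` for the current `j` of `F`. -/
def ForceFree (F : Form2) : Prop := ∀ ν, (∑ μ, F μ ν * g.current F μ) = 0

end Lorentzian

/-- `dF = 0` for a 2-form. -/
def Closed (F : Form2) : Prop :=
  ∀ μ ν ρ, pd μ (F ν ρ) + pd ν (F ρ μ) + pd ρ (F μ ν) = 0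

/-- The Levi-Civita alternating symbol. -/
def eps (μ ν ρ σ : Fin 4) : ℝ :=
  Matrix.det (Matrix.of fun i j => if (![μ, ν, ρ, σ] i) = j then (1 : ℝ) else 0)

/-- Hodge star of a 2-form: `(*F)_{μν} = ½ √(−g) ε_{μνρσ} F^{ρσ}`. -/
def Lorentzian.hodge2 (g : Lorentzian) (F : Form2) : Form2 := fun μ ν => fun p =>
  (1 / 2) * g.vol p * ∑ ρ, ∑ σ, eps μ ν ρ σ * g.up2 F ρ σ p

/-- Exterior derivative of a 2-form (components of the 3-form `dG`). -/
def dTwo (G : Form2) : Fin 4 → Fin 4 → Fin 4 → Sc := fun μ ν ρ =>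
  pd μ (G ν ρ) + pd ν (G ρ μ) + pd ρ (G μ ν)

/-- The (scalar density representing the) wedge product of a 3-form with a 1-form. -/
def wedge31 (J : Fin 4 → Fin 4 → Fin 4 → Sc) (ω : Cov) : Sc := fun p =>
  ∑ μ, ∑ ν, ∑ ρ, ∑ σ, eps μ ν ρ σ * J μ ν ρ p * ω σ p

/-- The chart is adapted to a *null* foliation: on the leaves (the level sets of
`(x³,x⁴)`) the metric is degenerate, i.e. `g³³g⁴⁴ − (g³⁴)² = 0`. -/
def Lorentzian.NullAdapted (g : Lorentzian) : Prop :=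
  ∀ p, g.ginv 2 2 p * g.ginv 3 3 p - (g.ginv 2 3 p) ^ 2 = 0

/-- `M^r = g^{r3} g^{34} − g^{33} g^{r4}` (coordinates `x³,x⁴` are indices `2,3`). -/
def Mvec (g : Lorentzian) : Vec := fun r =>
  g.ginv r 2 * g.ginv 2 3 - g.ginv 2 2 * g.ginv r 3

/-- `N^r = g^{r3} g^{44} − g^{34} g^{r4}`. -/
def Nvec (g : Lorentzian) : Vec := fun r =>
  g.ginv r 2 * g.ginv 3 3 - g.ginv 2 3 * g.ginv r 3

/-- A null foliation adapted frame `(s, l, α♯, n)`: `l, n` null, `s, α♯` unit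
spacelike, `g(n,l) = −1`, all other frame inner products zero, spanning `TM`. -/
structure Frame (g : Lorentzian) (s l a n : Vec) : Prop where
  smooth_s : ∀ μ, Smooth (s μ)
  smooth_l : ∀ μ, Smooth (l μ)
  smooth_a : ∀ μ, Smooth (a μ)
  smooth_n : ∀ μ, Smooth (n μ)
  l_null : g.inner l l = 0
  n_null : g.inner n n = 0
  s_unit : g.inner s s = 1
  a_unit : g.inner a a = 1
  n_l : g.inner n l = -1
  n_s : g.inner n s = 0
  n_a : g.inner n a = 0
  l_s : g.inner l s = 0
  l_a : g.inner l a = 0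
  s_a : g.inner s a = 0
  spans : ∀ (p : Pt) (v : Fin 4 → ℝ), ∃ c : Fin 4 → ℝ,
    ∀ μ, v μ = c 0 * s μ p + c 1 * l μ p + c 2 * a μ p + c 3 * n μ p

/-- `l` is a pregeodesic vector field: `∇_l l` is everywhere proportional to `l`. -/
def Pregeodesic (g : Lorentzian) (l : Vec) : Prop :=
  ∃ f : Sc, g.nabla l l = fun μ => f * l μ

/-- The null expansion scalar `θ = ½[g(∇_s l, s) + g(∇_{α♯} l, α♯)]`. -/
def theta (g : Lorentzian) (l s a : Vec) : Sc :=
  (1 / 2 : Sc) * (g.inner (g.nabla s l) s + g.inner (g.nabla a l) a)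

/-- The foliation admits an equipartition of null mean curvature w.r.t. `l`:
`θ = g(∇_s l, s)`. -/
def Equipartition (g : Lorentzian) (l s a : Vec) : Prop :=
  theta g l s a = g.inner (g.nabla s l) s

/-- `l` admits a uniform equipartition of null mean curvature:
`g(∇_s l, α♯) + g(∇_{α♯} l, s) = 0`. -/
def UniformEquipartition (g : Lorentzian) (l s a : Vec) : Prop :=
  g.inner (g.nabla s l) a + g.inner (g.nabla a l) s = 0

/-- `v` lies in the kernel of the 2-form `F`. -/
def InKernel (F : Form2) (v : Vec) : Prop := ∀ μ, (∑ ν, F μ ν * v ν) = 0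

/-- The kernel of `F` consists at each point exactly of the vectors tangent to the
leaves of the adapted chart (those with vanishing `x³`- and `x⁴`-components). -/
def KernelExact (F : Form2) : Prop :=
  ∀ (p : Pt) (v : Fin 4 → ℝ),
    (∀ μ, (∑ ν, F μ ν p * v ν) = 0) ↔ (v 2 = 0 ∧ v 3 = 0)

/-- The kernel of `F` is at each point exactly the span of `v` and `w`. -/
def KernelSpan (F : Form2) (v w : Vec) : Prop :=
  ∀ (p : Pt) (x : Fin 4 → ℝ),
    (∀ μ, (∑ ν, F μ ν p * x ν) = 0) ↔ ∃ c d : ℝ, ∀ μ, x μ = c * v μ p + d * w μ p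

/-- `u` is a function of `(x³,x⁴)` alone (constant along the leaves). -/
def LeafConstant (u : Sc) : Prop := pd 0 u = 0 ∧ pd 1 u = 0

/-- The 2-form `F = u dx³ ∧ dx⁴`. -/
def chartF (u : Sc) : Form2 := fun μ ν =>
  u * ((if μ = 2 ∧ ν = 3 then (1 : Sc) else 0) - if μ = 3 ∧ ν = 2 then (1 : Sc) else 0)

/-- The transition factor `κ = (α₃ l♭₄ − α₄ l♭₃)⁻¹`. -/
def kappa (g : Lorentzian) (a l : Vec) : Sc :=
  (g.flat a 2 * g.flat l 3 - g.flat a 3 * g.flat l 2)⁻¹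

/-- The 2-form `F = (u·κ) α ∧ l♭` (with `α = a♭`). -/
def frameF (g : Lorentzian) (a l : Vec) (u : Sc) : Form2 := fun μ ν =>
  u * kappa g a l * (g.flat a μ * g.flat l ν - g.flat a ν * g.flat l μ)

end FFE

namespace FFE

/-- Force-free condition (a): `l(ln|κ|) + dl♭(n,l) + ds♭(l,s) = 0`. -/
def condA (g : Lorentzian) (κ : Sc) (l s n : Vec) : Prop :=
  act l (logabs κ) + dOne (g.flat l) n l + dOne (g.flat s) l s = 0

/-- Force-free condition (b): `dl♭(l, α♯) = 0`. -/
def condB (g : Lorentzian) (l a : Vec) : Prop := dOne (g.flat l) l a = 0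

/-!
In the frame, `κ = α♯⁴ n³ − α♯³ n⁴`, so `κ` is smooth and nowhere zero and `ln|κ|` may be
differentiated. Each change of choices then acts on the two conditions explicitly:
* a chart change multiplies `κ` by `D⁻¹` with `l(D) = 0`, leaving `l(ln|κ|)` unchanged;
* under `l → f l`, `n → n/f`, the Leibniz rule for `d(f l♭)` together with `g(l,l) = 0`,
  `g(n,l) = −1`, `g(α♯,l) = 0` multiplies the left-hand side of (a) by `f` and that of (b)
  by `f²`;
* under the shifts, (b) is unchanged since `dl♭(l,l) = 0`, and the left-hand side of (a)
  changes by `−h · dl♭(l, α♯)`, which vanishes by (b).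
-/

section Calculus

variable {f h : Sc}

lemma Smooth.differentiable (hf : Smooth f) : Differentiable ℝ f :=
  ContDiff.differentiable hf (by simp)

lemma pd_add (hf : Differentiable ℝ f) (hh : Differentiable ℝ h) (i : Fin 4) :
    pd i (f + h) = pd i f + pd i h := by
  funext p
  simp [pd, fderiv_add (hf p) (hh p)]

lemma pd_sub (hf : Differentiable ℝ f) (hh : Differentiable ℝ h) (i : Fin 4) :
    pd i (f - h) = pd i f - pd i h := by
  funext p
  simp [pd, fderiv_sub (hf p) (hh p)]

lemma pd_mul (hf : Differentiable ℝ f) (hh : Differentiable ℝ h) (i : Fin 4) :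
    pd i (f * h) = pd i f * h + f * pd i h := by
  funext p
  simp only [pd, fderiv_mul (hf p) (hh p), add_apply, smul_apply,
    smul_eq_mul, Pi.add_apply, Pi.mul_apply]
  ring

lemma logabs_eq_log (f : Sc) : logabs f = fun p => Real.log (f p) :=
  funext fun p => Real.log_abs (f p)

lemma differentiable_logabs (hf : Differentiable ℝ f) (hf0 : ∀ p, f p ≠ 0) :
    Differentiable ℝ (logabs f) := by
  rw [logabs_eq_log]
  exact hf.log hf0

lemma pd_logabs (hf : Differentiable ℝ f) (hf0 : ∀ p, f p ≠ 0) (i : Fin 4) :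
    pd i (logabs f) = f⁻¹ * pd i f := by
  funext p
  simp [pd, logabs_eq_log, ((hf p).hasFDerivAt.log (hf0 p)).fderiv]

lemma logabs_mul_inv (hf0 : ∀ p, f p ≠ 0) (hh0 : ∀ p, h p ≠ 0) :
    logabs (f * h⁻¹) = logabs f - logabs h := by
  funext p
  simp [logabs, abs_mul, Real.log_mul (abs_ne_zero.mpr (hf0 p))
    (inv_ne_zero (abs_ne_zero.mpr (hh0 p))), sub_eq_add_neg]

end Calculus

section VectorFields

lemma act_apply (v : Vec) (f : Sc) (p : Pt) : act v f p = ∑ i, v i p * pd i f p := by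
  simp [act, Finset.sum_apply]

lemma act_smul (c : Sc) (v : Vec) (f : Sc) : act (fun μ => c * v μ) f = c * act v f := by
  funext p
  simp only [act_apply, Pi.mul_apply, Fin.sum_univ_four]
  ring

lemma act_sub (v : Vec) {f h : Sc} (hf : Differentiable ℝ f) (hh : Differentiable ℝ h) :
    act v (f - h) = act v f - act v h := by
  funext p
  simp only [act_apply, pd_sub hf hh, Pi.sub_apply, Fin.sum_univ_four]
  ring

lemma act_logabs (v : Vec) {f : Sc} (hf : Differentiable ℝ f) (hf0 : ∀ p, f p ≠ 0) :
    act v (logabs f) = f⁻¹ * act v f := by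
  funext p
  simp only [act_apply, pd_logabs hf hf0, Pi.mul_apply, Fin.sum_univ_four]
  ring

lemma act_logabs_mul_inv (v : Vec) {κ f : Sc} (hκ : Differentiable ℝ κ) (hκ0 : ∀ p, κ p ≠ 0)
    (hf : Differentiable ℝ f) (hf0 : ∀ p, f p ≠ 0) :
    act v (logabs (κ * f⁻¹)) = act v (logabs κ) - f⁻¹ * act v f := by
  rw [logabs_mul_inv hκ0 hf0, act_sub v (differentiable_logabs hκ hκ0)
    (differentiable_logabs hf hf0), act_logabs v hf hf0]

end VectorFields

section ExteriorDerivative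

variable (ω : Cov)

lemma dOne_apply (v w : Vec) (p : Pt) :
    dOne ω v w p = ∑ μ, ∑ ν, (pd μ (ω ν) p - pd ν (ω μ) p) * v μ p * w ν p := by
  simp [dOne, Finset.sum_apply]

lemma dOne_swap (v w : Vec) : dOne ω v w = -dOne ω w v := by
  funext p
  simp only [dOne_apply, Pi.neg_apply, Fin.sum_univ_four]
  ring

lemma dOne_self (v : Vec) : dOne ω v v = 0 := by
  funext p
  simp only [dOne_apply, Pi.zero_apply, Fin.sum_univ_four]
  ring

lemma dOne_smul_left (c : Sc) (v w : Vec) :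
    dOne ω (fun μ => c * v μ) w = c * dOne ω v w := by
  funext p
  simp only [dOne_apply, Pi.mul_apply, Fin.sum_univ_four]
  ring

lemma dOne_add_smul_left (c : Sc) (v w x : Vec) :
    dOne ω (fun μ => v μ + c * w μ) x = dOne ω v x + c * dOne ω w x := by
  funext p
  simp only [dOne_apply, Pi.add_apply, Pi.mul_apply, Fin.sum_univ_four]
  ring

lemma dOne_smul_right (c : Sc) (v w : Vec) :
    dOne ω v (fun μ => c * w μ) = c * dOne ω v w := by
  funext p
  simp only [dOne_apply, Pi.mul_apply, Fin.sum_univ_four]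
  ring

lemma dOne_add_smul_right (c : Sc) (v w x : Vec) :
    dOne ω v (fun μ => w μ + c * x μ) = dOne ω v w + c * dOne ω v x := by
  funext p
  simp only [dOne_apply, Pi.add_apply, Pi.mul_apply, Fin.sum_univ_four]
  ring

lemma dOne_add_smul_self_right (c : Sc) (v w : Vec) :
    dOne ω v (fun μ => w μ + c * v μ) = dOne ω v w := by
  rw [dOne_add_smul_right, dOne_self, mul_zero, add_zero]

lemma dOne_add_form {ω₁ ω₂ : Cov} (hω₁ : ∀ ν, Differentiable ℝ (ω₁ ν))
    (hω₂ : ∀ ν, Differentiable ℝ (ω₂ ν)) (v w : Vec) :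
    dOne (fun ν => ω₁ ν + ω₂ ν) v w = dOne ω₁ v w + dOne ω₂ v w := by
  funext p
  simp only [dOne_apply, pd_add (hω₁ _) (hω₂ _), Pi.add_apply, Fin.sum_univ_four]
  ring

lemma dOne_smul_form {f : Sc} (hf : Differentiable ℝ f) (hω : ∀ ν, Differentiable ℝ (ω ν))
    (v w : Vec) :
    dOne (fun ν => f * ω ν) v w =
      f * dOne ω v w + act v f * ∑ ν, ω ν * w ν - act w f * ∑ ν, ω ν * v ν := by
  funext p
  simp only [dOne_apply, act_apply, pd_mul hf (hω _), Pi.add_apply, Pi.sub_apply,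
    Pi.mul_apply, Fin.sum_univ_four]
  ring

end ExteriorDerivative

namespace Lorentzian

variable (g : Lorentzian)

lemma flat_apply (v : Vec) (μ : Fin 4) (p : Pt) :
    g.flat v μ p = ∑ ν, g.gdown μ ν p * v ν p := by
  simp [flat, Finset.sum_apply]

lemma inner_apply (v w : Vec) (p : Pt) :
    g.inner v w p = ∑ μ, ∑ ν, g.gdown μ ν p * v μ p * w ν p := by
  simp [inner, Finset.sum_apply]

lemma inner_comm (v w : Vec) : g.inner v w = g.inner w v := by
  funext p
  simp only [inner_apply]
  rw [Finset.sum_comm]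
  exact Finset.sum_congr rfl fun ν _ => Finset.sum_congr rfl fun μ _ => by
    rw [congrFun (g.symm_gdown μ ν) p]; ring

lemma sum_flat_mul (v w : Vec) : ∑ ν, g.flat v ν * w ν = g.inner w v := by
  funext p
  simp only [Finset.sum_apply, Pi.mul_apply, flat_apply, inner_apply, Finset.sum_mul]
  exact Finset.sum_congr rfl fun μ _ => Finset.sum_congr rfl fun ν _ => by ring

lemma flat_smul (c : Sc) (v : Vec) : g.flat (fun μ => c * v μ) = fun ν => c * g.flat v ν := by
  funext ν p
  simp only [flat_apply, Pi.mul_apply, Finset.mul_sum]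
  exact Finset.sum_congr rfl fun μ _ => by ring

lemma flat_add_smul (c : Sc) (v w : Vec) :
    g.flat (fun μ => v μ + c * w μ) = fun ν => g.flat v ν + c * g.flat w ν := by
  funext ν p
  simp only [flat_apply, Pi.add_apply, Pi.mul_apply, Finset.mul_sum, ← Finset.sum_add_distrib]
  exact Finset.sum_congr rfl fun μ _ => by ring

lemma inner_smul_left (c : Sc) (v w : Vec) : g.inner (fun μ => c * v μ) w = c * g.inner v w := by
  funext p
  simp only [inner_apply, Pi.mul_apply, Finset.mul_sum]
  exact Finset.sum_congr rfl fun μ _ => Finset.sum_congr rfl fun ν _ => by ring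

lemma inner_add_smul_left (c : Sc) (v w x : Vec) :
    g.inner (fun μ => v μ + c * w μ) x = g.inner v x + c * g.inner w x := by
  funext p
  simp only [inner_apply, Pi.add_apply, Pi.mul_apply, Finset.mul_sum, ← Finset.sum_add_distrib]
  exact Finset.sum_congr rfl fun μ _ => Finset.sum_congr rfl fun ν _ => by ring

lemma differentiable_flat {v : Vec} (hv : ∀ μ, Differentiable ℝ (v μ)) (μ : Fin 4) :
    Differentiable ℝ (g.flat v μ) := by
  have : g.flat v μ = fun p => ∑ ν, g.gdown μ ν p * v ν p := funext (g.flat_apply v μ)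
  rw [this]
  exact Differentiable.fun_sum fun ν _ =>
    (g.smooth_gdown μ ν).differentiable.mul (hv ν)

end Lorentzian

lemma isUnit_of_forall_ne_zero {f : Sc} (hf0 : ∀ p, f p ≠ 0) : IsUnit f :=
  Pi.isUnit_iff.mpr fun p => (hf0 p).isUnit

namespace Frame

variable {g : Lorentzian} {s l a n : Vec}

lemma sum_flat_mul_of_expansion (hF : Frame g s l a n) {p : Pt} {e c : Fin 4 → ℝ}
    (hc : ∀ μ, e μ = c 0 * s μ p + c 1 * l μ p + c 2 * a μ p + c 3 * n μ p) :
    ∑ ν, g.flat a ν p * e ν = c 2 ∧ ∑ ν, g.flat l ν p * e ν = -c 3 := by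
  have expand : ∀ x, ∑ ν, g.flat x ν p * e ν =
      c 0 * g.inner s x p + c 1 * g.inner l x p + c 2 * g.inner a x p + c 3 * g.inner n x p := by
    intro x
    simp only [← congrFun (g.sum_flat_mul x _) p, Finset.sum_apply, Pi.mul_apply, hc,
      Fin.sum_univ_four]
    ring
  rw [expand, expand, hF.s_a, hF.l_a, hF.a_unit, hF.n_a, g.inner_comm s l, hF.l_s, hF.l_null,
    g.inner_comm a l, hF.l_a, hF.n_l]
  simp

/- Expanding `∂₃, ∂₄` in the frame, only `α♯` and `n` contribute to the `x³, x⁴` components,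
so the matrix of `(α, l♭)` on `(∂₃, ∂₄)` is inverse to that of `(α♯, −n)` in `(x³, x⁴)`. -/
lemma flat_det_mul_det (hF : Frame g s l a n) (hl2 : l 2 = 0) (hl3 : l 3 = 0)
    (hs2 : s 2 = 0) (hs3 : s 3 = 0) (p : Pt) :
    (g.flat a 2 p * g.flat l 3 p - g.flat a 3 p * g.flat l 2 p) *
      (a 3 p * n 2 p - a 2 p * n 3 p) = 1 := by
  obtain ⟨u, hu⟩ := hF.spans p (Pi.single 2 1)
  obtain ⟨v, hv⟩ := hF.spans p (Pi.single 3 1)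
  obtain ⟨hau, hlu⟩ := hF.sum_flat_mul_of_expansion hu
  obtain ⟨hav, hlv⟩ := hF.sum_flat_mul_of_expansion hv
  have hu2 := hu 2
  have hu3 := hu 3
  have hv2 := hv 2
  have hv3 := hv 3
  simp only [Pi.single_apply, mul_ite, mul_one, mul_zero, Finset.sum_ite_eq', Finset.mem_univ,
    ↓reduceIte] at hau hlu hav hlv
  simp only [hl2, hl3, hs2, hs3, Pi.zero_apply, Pi.single_eq_same, Pi.single_eq_of_ne, ne_eq,
    Fin.reduceEq, not_false_eq_true, mul_zero, add_zero, zero_add] at hu2 hu3 hv2 hv3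
  rw [hau, hlu, hav, hlv]
  linear_combination (u 2 * a 3 p + u 3 * n 3 p) * hv2 - (v 2 * a 3 p + v 3 * n 3 p) * hu2 - hv3

lemma kappa_eq (hF : Frame g s l a n) (hl2 : l 2 = 0) (hl3 : l 3 = 0)
    (hs2 : s 2 = 0) (hs3 : s 3 = 0) :
    kappa g a l = fun p => a 3 p * n 2 p - a 2 p * n 3 p :=
  funext fun p => inv_eq_of_mul_eq_one_right (hF.flat_det_mul_det hl2 hl3 hs2 hs3 p)

lemma differentiable_kappa (hF : Frame g s l a n) (hl2 : l 2 = 0) (hl3 : l 3 = 0)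
    (hs2 : s 2 = 0) (hs3 : s 3 = 0) : Differentiable ℝ (kappa g a l) := by
  rw [hF.kappa_eq hl2 hl3 hs2 hs3]
  have ha := fun μ => (hF.smooth_a μ).differentiable
  have hn := fun μ => (hF.smooth_n μ).differentiable
  exact ((ha 3).mul (hn 2)).sub ((ha 2).mul (hn 3))

lemma kappa_ne_zero (hF : Frame g s l a n) (hl2 : l 2 = 0) (hl3 : l 3 = 0)
    (hs2 : s 2 = 0) (hs3 : s 3 = 0) (p : Pt) : kappa g a l p ≠ 0 := by
  rw [hF.kappa_eq hl2 hl3 hs2 hs3]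
  exact right_ne_zero_of_mul_eq_one (hF.flat_det_mul_det hl2 hl3 hs2 hs3 p)

end Frame

section Invariance

variable {g : Lorentzian} {κ : Sc} {s l a n : Vec}

lemma condA_mul_inv_iff {D : Sc} (hκ : Differentiable ℝ κ) (hκ0 : ∀ p, κ p ≠ 0)
    (hD : Differentiable ℝ D) (hD0 : ∀ p, D p ≠ 0) (hlD : act l D = 0) :
    condA g (κ * D⁻¹) l s n ↔ condA g κ l s n := by
  rw [condA, condA, act_logabs_mul_inv l hκ hκ0 hD hD0, hlD, mul_zero, sub_zero]

lemma condA_rescale_iff {f : Sc} (hκ : Differentiable ℝ κ) (hκ0 : ∀ p, κ p ≠ 0)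
    (hf : Differentiable ℝ f) (hf0 : ∀ p, f p ≠ 0) (hl : ∀ μ, Differentiable ℝ (g.flat l μ))
    (hll : g.inner l l = 0) (hnl : g.inner n l = -1) :
    condA g (κ * f⁻¹) (fun μ => f * l μ) s (fun μ => f⁻¹ * n μ) ↔ condA g κ l s n := by
  have hexpr : act (fun μ => f * l μ) (logabs (κ * f⁻¹)) +
      dOne (g.flat fun μ => f * l μ) (fun μ => f⁻¹ * n μ) (fun μ => f * l μ) +
      dOne (g.flat s) (fun μ => f * l μ) s =
      f * (act l (logabs κ) + dOne (g.flat l) n l + dOne (g.flat s) l s) := by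
    rw [act_smul, act_logabs_mul_inv l hκ hκ0 hf hf0, g.flat_smul, dOne_smul_form _ hf hl,
      dOne_smul_left, dOne_smul_right, dOne_smul_left, g.sum_flat_mul, g.sum_flat_mul,
      g.inner_smul_left, g.inner_smul_left, hll, hnl, act_smul, act_smul]
    funext p
    have hfp := hf0 p
    simp only [mul_zero, add_zero, mul_neg, mul_one, sub_neg_eq_add, Pi.add_apply, Pi.mul_apply,
      Pi.sub_apply, Pi.inv_apply]
    field_simp
    ring
  rw [condA, condA, hexpr, (isUnit_of_forall_ne_zero hf0).mul_right_eq_zero]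

lemma condB_rescale_iff {f : Sc} (hf : Differentiable ℝ f) (hf0 : ∀ p, f p ≠ 0)
    (hl : ∀ μ, Differentiable ℝ (g.flat l μ)) (hll : g.inner l l = 0) (hal : g.inner a l = 0) :
    condB g (fun μ => f * l μ) a ↔ condB g l a := by
  have hexpr : dOne (g.flat fun μ => f * l μ) (fun μ => f * l μ) a =
      (f * f) * dOne (g.flat l) l a := by
    rw [g.flat_smul, dOne_smul_form _ hf hl, g.sum_flat_mul, g.sum_flat_mul, g.inner_smul_left,
      hll, hal, dOne_smul_left]
    ring
  have hff : IsUnit (f * f) := (isUnit_of_forall_ne_zero hf0).mul (isUnit_of_forall_ne_zero hf0)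
  rw [condB, condB, hexpr, hff.mul_right_eq_zero]

lemma condB_shift_iff (h : Sc) : condB g l (fun μ => a μ + h * l μ) ↔ condB g l a := by
  rw [condB, condB, dOne_add_smul_self_right]

lemma condA_shift_iff (gt h : Sc) (hgt : Differentiable ℝ gt)
    (hs : ∀ μ, Differentiable ℝ (g.flat s μ)) (hl : ∀ μ, Differentiable ℝ (g.flat l μ))
    (hll : g.inner l l = 0) (hsl : g.inner s l = 0) (hB : condB g l a) :
    condA g κ l (fun μ => s μ + gt * l μ)
        (fun μ => n μ + ((gt * gt + h * h) / 2) * l μ + gt * s μ + h * a μ) ↔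
      condA g κ l s n := by
  have hexpr : act l (logabs κ) +
      dOne (g.flat l) (fun μ => n μ + ((gt * gt + h * h) / 2) * l μ + gt * s μ + h * a μ) l +
      dOne (g.flat fun μ => s μ + gt * l μ) l (fun μ => s μ + gt * l μ) =
      act l (logabs κ) + dOne (g.flat l) n l + dOne (g.flat s) l s -
        h * dOne (g.flat l) l a := by
    rw [g.flat_add_smul, dOne_add_form hs fun ν => hgt.mul (hl ν), dOne_smul_form _ hgt hl,
      g.sum_flat_mul, g.sum_flat_mul, g.inner_add_smul_left, hll, hsl,
      dOne_add_smul_self_right, dOne_add_smul_self_right, dOne_add_smul_left,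
      dOne_add_smul_left, dOne_add_smul_left, dOne_self, dOne_swap (g.flat l) a l,
      dOne_swap (g.flat l) s l]
    ring
  rw [condA, condA, hexpr, hB, mul_zero, sub_zero]

end Invariance

/-- The force-free conditions (a) and (b) are independent of the
choices made: invariant under a change of null foliation adapted chart (under
which `κ → κ/D` with `D` the Jacobian factor, constant along the leaves, while the
frame is unchanged); under the rescaling `l → f l`, `n → n/f`, `κ → κ/f`; and
under the shifts `s → s + g̃ l`, `α → α + h l♭` (i.e. `α♯ → α♯ + h l`) with
`n → n + ((g̃² + h²)/2) l + g̃ s + h α♯`. -/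
theorem conditions_invariant (g : Lorentzian) (s l a n : Vec)
    (hframe : Frame g s l a n)
    (hl2 : l 2 = 0) (hl3 : l 3 = 0) (hs2 : s 2 = 0) (hs3 : s 3 = 0)
    (κ : Sc) (hκ : κ = kappa g a l) :
    (∀ D : Sc, Smooth D → (∀ p, D p ≠ 0) → act l D = 0 → act s D = 0 →
      ((condA g (κ * D⁻¹) l s n ∧ condB g l a) ↔
        (condA g κ l s n ∧ condB g l a))) ∧
    (∀ f : Sc, Smooth f → (∀ p, f p ≠ 0) →
      ((condA g (κ * f⁻¹) (fun μ => f * l μ) s (fun μ => f⁻¹ * n μ) ∧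
          condB g (fun μ => f * l μ) a) ↔
        (condA g κ l s n ∧ condB g l a))) ∧
    (∀ gt h : Sc, Smooth gt → Smooth h →
      ((condA g κ l (fun μ => s μ + gt * l μ)
            (fun μ => n μ + ((gt * gt + h * h) / 2) * l μ + gt * s μ + h * a μ) ∧
          condB g l (fun μ => a μ + h * l μ)) ↔
        (condA g κ l s n ∧ condB g l a))) := by
  subst hκ
  have hκ := hframe.differentiable_kappa hl2 hl3 hs2 hs3
  have hκ0 := hframe.kappa_ne_zero hl2 hl3 hs2 hs3
  have hl := g.differentiable_flat fun μ => (hframe.smooth_l μ).differentiable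
  refine ⟨fun D hD hD0 hlD _ => ?_, fun f hf hf0 => ?_, fun gt h hgt _ => ?_⟩
  · rw [condA_mul_inv_iff hκ hκ0 hD.differentiable hD0 hlD]
  · rw [condA_rescale_iff hκ hκ0 hf.differentiable hf0 hl hframe.l_null hframe.n_l,
      condB_rescale_iff hf.differentiable hf0 hl hframe.l_null
        ((g.inner_comm a l).trans hframe.l_a)]
  · rw [condB_shift_iff]
    exact and_congr_left fun hB => condA_shift_iff gt h hgt.differentiable
      (g.differentiable_flat fun μ => (hframe.smooth_s μ).differentiable) hl hframe.l_null
      ((g.inner_comm s l).trans hframe.l_s) hB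

end FFE
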